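/- arXiv:2408.05161 — 5 statements merged into one kernel-verified Lean document; each statement's English description precedes it below -/
import Mathlib

section
/- Let X = Y be the closed unit disk in ℝ², μ = ν the normalized Lebesgue (uniform) probability measure on the disk, and c(x,y,x̄,ȳ) = | ‖x−x̄‖² − ‖y−ȳ‖² |². Then both π_0 = (Id × Id)_♯ μ and π_0' = (Id × R_θ)_♯ μ, where R_θ is rotation by an angle θ ∈ (0, 2π), achieve quadratic total cost zero, and for θ ≠ 0 these are distinct measures; hence the quadratic transportation problem can have multiple solutions even for absolutely continuous marginals. -/
open MeasureTheory Filter Topology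

def unitDisk : Set ℂ := Metric.closedBall 0 1

noncomputable def diskUniform : Measure ℂ :=
  (volume unitDisk)⁻¹ • volume.restrict unitDisk

noncomputable def distortionCost : (ℂ × ℂ) × (ℂ × ℂ) → ℝ :=
  fun p => |‖p.1.1 - p.2.1‖ ^ 2 - ‖p.1.2 - p.2.2‖ ^ 2| ^ 2

noncomputable def idPlan : Measure (ℂ × ℂ) :=
  diskUniform.map (fun x => (x, x))

noncomputable def rotPlan (θ : ℝ) : Measure (ℂ × ℂ) :=
  diskUniform.map (fun x => (x, Complex.exp (θ * Complex.I) * x))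

lemma vol_disk_ne_zero : volume unitDisk ≠ 0 :=
  (Metric.measure_closedBall_pos _ _ one_pos).ne'

lemma vol_disk_ne_top : volume unitDisk ≠ ⊤ :=
  MeasureTheory.measure_closedBall_lt_top.ne

lemma rot_measurable (θ : ℝ) : Measurable (fun x : ℂ => Complex.exp (θ * Complex.I) * x) :=
  measurable_id.const_mul _

lemma rot_eq (θ : ℝ) :
    (rotation (Circle.exp θ) : ℂ → ℂ) = fun x => Complex.exp (θ * Complex.I) * x := by
  ext x; simp [rotation_apply, Circle.smul_def]

lemma rot_mp (θ : ℝ) :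
    MeasurePreserving (fun x : ℂ => Complex.exp (θ * Complex.I) * x) volume volume := by
  rw [← rot_eq θ]
  exact (rotation (Circle.exp θ)).measurePreserving

lemma rot_preimage (θ : ℝ) :
    (fun x : ℂ => Complex.exp (θ * Complex.I) * x) ⁻¹' unitDisk = unitDisk := by
  ext x
  simp [unitDisk, Metric.mem_closedBall, dist_eq_norm, norm_mul,
    Complex.norm_exp_ofReal_mul_I]

lemma diskUniform_rot (θ : ℝ) :
    diskUniform.map (fun x : ℂ => Complex.exp (θ * Complex.I) * x) = diskUniform := by
  unfold diskUniform
  rw [Measure.map_smul]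
  congr 1
  have h := Measure.restrict_map (μ := volume) (rot_measurable θ)
    (s := unitDisk) (Metric.isClosed_closedBall.measurableSet)
  rw [rot_preimage θ] at h
  rw [← h, (rot_mp θ).map_eq]

lemma diskUniform_univ : diskUniform Set.univ = 1 := by
  unfold diskUniform
  simp only [Measure.smul_apply, Measure.restrict_apply MeasurableSet.univ, Set.univ_inter,
    smul_eq_mul]
  exact ENNReal.inv_mul_cancel vol_disk_ne_zero vol_disk_ne_top

instance : IsFiniteMeasure diskUniform :=
  ⟨by rw [diskUniform_univ]; exact ENNReal.one_lt_top⟩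

lemma cont_cost : Continuous distortionCost := by
  unfold distortionCost
  fun_prop

/-- Non-uniqueness for the quadratic transportation problem on the unit disk
with uniform marginals and distortion cost: both `(Id × Id)_♯ μ` and
`(Id × R_θ)_♯ μ` are couplings of `μ` with itself achieving quadratic total
cost `0`, yet for `θ ∈ (0, 2π)` they are distinct measures. -/
theorem quadratic_transport_nonunique
    (θ : ℝ) (hθ : θ ∈ Set.Ioo (0 : ℝ) (2 * Real.pi)) :
    (idPlan.map Prod.fst = diskUniform ∧ idPlan.map Prod.snd = diskUniform) ∧
    ((rotPlan θ).map Prod.fst = diskUniform ∧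
      (rotPlan θ).map Prod.snd = diskUniform) ∧
    (∫ p, distortionCost p ∂(idPlan.prod idPlan)) = 0 ∧
    (∫ p, distortionCost p ∂((rotPlan θ).prod (rotPlan θ))) = 0 ∧
    idPlan ≠ rotPlan θ := by
  obtain ⟨hθ0, hθ2⟩ := hθ
  have hdiag : Measurable (fun x : ℂ => (x, x)) := measurable_id.prodMk measurable_id
  have hrotm : Measurable (fun x : ℂ => (x, Complex.exp (θ * Complex.I) * x)) :=
    measurable_id.prodMk (rot_measurable θ)
  have ha1 : Complex.exp (θ * Complex.I) ≠ 1 := by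
    intro hc
    rw [Complex.exp_eq_one_iff] at hc
    obtain ⟨n, hn⟩ := hc
    have h' : (θ : ℂ) * Complex.I = ((n : ℂ) * (2 * Real.pi)) * Complex.I := by
      rw [hn]; ring
    have : (θ : ℂ) = n * (2 * Real.pi) := mul_right_cancel₀ Complex.I_ne_zero h'
    have hθn : θ = n * (2 * Real.pi) := by exact_mod_cast this
    rcases le_or_gt (n : ℝ) 0 with h | h
    · nlinarith [Real.pi_pos]
    · have : (1 : ℝ) ≤ n := by exact_mod_cast h
      nlinarith [Real.pi_pos]
  refine ⟨⟨?_, ?_⟩, ⟨?_, ?_⟩, ?_, ?_, ?_⟩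
  · rw [idPlan, Measure.map_map measurable_fst hdiag]
    rw [show (Prod.fst ∘ fun x : ℂ => (x, x)) = id from rfl, Measure.map_id]
  · rw [idPlan, Measure.map_map measurable_snd hdiag]
    rw [show (Prod.snd ∘ fun x : ℂ => (x, x)) = id from rfl, Measure.map_id]
  · rw [rotPlan, Measure.map_map measurable_fst hrotm]
    rw [show (Prod.fst ∘ fun x : ℂ => (x, Complex.exp (θ * Complex.I) * x)) = id from rfl,
      Measure.map_id]
  · rw [rotPlan, Measure.map_map measurable_snd hrotm]
    exact diskUniform_rot θ
  · rw [idPlan, Measure.map_prod_map _ _ hdiag hdiag,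
      integral_map (hdiag.prodMap hdiag).aemeasurable cont_cost.aestronglyMeasurable]
    simp [distortionCost]
  · rw [rotPlan, Measure.map_prod_map _ _ hrotm hrotm,
      integral_map (hrotm.prodMap hrotm).aemeasurable cont_cost.aestronglyMeasurable]
    have : ∀ z : ℂ × ℂ, distortionCost (Prod.map (fun x : ℂ => (x, Complex.exp (θ * Complex.I) * x))
        (fun x : ℂ => (x, Complex.exp (θ * Complex.I) * x)) z) = 0 := by
      intro z
      simp only [distortionCost, Prod.map]
      rw [← mul_sub, norm_mul,
        Complex.norm_exp_ofReal_mul_I, one_mul]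
      simp
    simp [this]
  · intro h
    have hD : MeasurableSet {p : ℂ × ℂ | p.1 = p.2} :=
      (isClosed_eq continuous_fst continuous_snd).measurableSet
    have h1 : idPlan {p : ℂ × ℂ | p.1 = p.2} = 1 := by
      rw [idPlan, Measure.map_apply hdiag hD]
      simpa using diskUniform_univ
    have h2 : rotPlan θ {p : ℂ × ℂ | p.1 = p.2} = 0 := by
      rw [rotPlan, Measure.map_apply hrotm hD]
      have hs : (fun x : ℂ => (x, Complex.exp (θ * Complex.I) * x)) ⁻¹'
          {p : ℂ × ℂ | p.1 = p.2} = {0} := by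
        ext x
        simp only [Set.mem_preimage, Set.mem_setOf_eq, Set.mem_singleton_iff]
        constructor
        · intro hx
          by_contra hx0
          exact ha1 (mul_right_cancel₀ hx0 (by rw [one_mul]; exact hx)).symm
        · rintro rfl; simp
      rw [hs]
      unfold diskUniform
      simp
    rw [h, h2] at h1
    exact zero_ne_one h1
end

section
/- Let X = Y = [0,1] (or any compact space), let c(x₁,x₂,x₃,x₄) = ½ Σ_{i<j} ‖x_i − x_j‖², and let μ = ν = Lebesgue measure on [0,1]. Then the infimum of the 4-marginal multi-marginal optimal transport problem with marginals (μ,ν,μ,ν) and cost c is 0, while the infimum of the quadratic transportation problem inf_{π ∈ Π(μ,ν)} ∬ c(x,y,x̄,ȳ) dπ(x,y) dπ(x̄,ȳ) is strictly positive; in particular the multi-marginal infimum is strictly smaller. -/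
open MeasureTheory Filter Topology

/-- Lebesgue measure on `[0,1]`. -/
noncomputable def lebI : Measure ℝ := volume.restrict (Set.Icc 0 1)

/-- The cost `c(x₁,x₂,x₃,x₄) = ½ Σ_{i<j} ‖x_i − x_j‖²`, with the four
coordinates arranged as `((x₁,x₂),(x₃,x₄))`. -/
noncomputable def quadSumCost : (ℝ × ℝ) × (ℝ × ℝ) → ℝ := fun p =>
  (1 / 2) * ((p.1.1 - p.1.2) ^ 2 + (p.1.1 - p.2.1) ^ 2 + (p.1.1 - p.2.2) ^ 2
    + (p.1.2 - p.2.1) ^ 2 + (p.1.2 - p.2.2) ^ 2 + (p.2.1 - p.2.2) ^ 2)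

/-- Values of the 4-marginal multi-marginal problem with marginals
`(μ, ν, μ, ν) = (lebI, lebI, lebI, lebI)` and cost `quadSumCost`. -/
def multiMarginalValues : Set ℝ :=
  {r | ∃ γ : Measure ((ℝ × ℝ) × (ℝ × ℝ)), IsProbabilityMeasure γ ∧
    γ.map (fun p => p.1.1) = lebI ∧ γ.map (fun p => p.1.2) = lebI ∧
    γ.map (fun p => p.2.1) = lebI ∧ γ.map (fun p => p.2.2) = lebI ∧
    r = ∫ p, quadSumCost p ∂γ}

/-- Values of the quadratic transportation problem with marginals `lebI` and
cost `quadSumCost`. -/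
def quadraticValues : Set ℝ :=
  {r | ∃ π : Measure (ℝ × ℝ), IsProbabilityMeasure π ∧
    π.map Prod.fst = lebI ∧ π.map Prod.snd = lebI ∧
    r = ∫ p, quadSumCost p ∂(π.prod π)}

lemma lebI_prob : IsProbabilityMeasure lebI := by
  constructor
  simp [lebI, Real.volume_Icc]

lemma quadSumCost_nonneg (p : (ℝ × ℝ) × (ℝ × ℝ)) : 0 ≤ quadSumCost p := by
  unfold quadSumCost; positivity

lemma quadSumCost_continuous : Continuous quadSumCost := by
  unfold quadSumCost; fun_prop

lemma integral_lebI_id : ∫ x, x ∂lebI = 1 / 2 := by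
  have : ∫ x in Set.Icc (0:ℝ) 1, x = ∫ x in Set.Ioc (0:ℝ) 1, x :=
    MeasureTheory.integral_Icc_eq_integral_Ioc
  rw [lebI, this, ← intervalIntegral.integral_of_le (by norm_num : (0:ℝ) ≤ 1)]
  simp [integral_id]

lemma integral_lebI_sq : ∫ x, x ^ 2 ∂lebI = 1 / 3 := by
  have : ∫ x in Set.Icc (0:ℝ) 1, x ^ 2 = ∫ x in Set.Ioc (0:ℝ) 1, x ^ 2 :=
    MeasureTheory.integral_Icc_eq_integral_Ioc
  rw [lebI, this, ← intervalIntegral.integral_of_le (by norm_num : (0:ℝ) ≤ 1)]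
  rw [integral_pow]; norm_num

lemma ae_of_marginal {π : Measure (ℝ × ℝ)} {f : ℝ × ℝ → ℝ} (hf : Measurable f)
    (h : π.map f = lebI) : ∀ᵐ p ∂π, f p ∈ Set.Icc (0:ℝ) 1 := by
  rw [ae_iff]
  have h0 : π.map f (Set.Icc (0:ℝ) 1)ᶜ = 0 := by
    rw [h, lebI, Measure.restrict_apply measurableSet_Icc.compl]
    simp
  rw [Measure.map_apply hf measurableSet_Icc.compl] at h0
  convert h0 using 2
  rfl

lemma ae_prod_mem {π : Measure (ℝ × ℝ)} [IsProbabilityMeasure π] {S : Set (ℝ × ℝ)}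
    (h : ∀ᵐ p ∂π, p ∈ S) :
    ∀ᵐ q ∂(π.prod π), q.1 ∈ S ∧ q.2 ∈ S := by
  have hc : π Sᶜ = 0 := by rw [ae_iff] at h; exact h
  rw [ae_iff]
  have hsub : {q : (ℝ × ℝ) × (ℝ × ℝ) | ¬(q.1 ∈ S ∧ q.2 ∈ S)} ⊆
      (Sᶜ ×ˢ Set.univ) ∪ (Set.univ ×ˢ Sᶜ) := by
    intro q hq
    simp only [Set.mem_setOf_eq, not_and_or] at hq
    rcases hq with h1 | h1
    · exact Or.inl ⟨h1, trivial⟩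
    · exact Or.inr ⟨trivial, h1⟩
  refine measure_mono_null hsub (measure_union_null ?_ ?_) <;>
    simp [Measure.prod_prod, hc]

lemma integrable_of_bound_on {α : Type*} [MeasurableSpace α] {μ : Measure α}
    [IsFiniteMeasure μ] {f : α → ℝ} {S : Set α} (hm : AEStronglyMeasurable f μ)
    (hs : ∀ᵐ a ∂μ, a ∈ S) {C : ℝ} (hb : ∀ a ∈ S, ‖f a‖ ≤ C) : Integrable f μ :=
  ⟨hm, HasFiniteIntegral.of_bounded (hs.mono fun a ha => hb a ha)⟩

lemma sub_sq_le {a b : ℝ} (ha : |a| ≤ 1) (hb : |b| ≤ 1) : (a - b) ^ 2 ≤ 4 := by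
  rw [abs_le] at ha hb; nlinarith

set_option maxHeartbeats 2000000 in
lemma quadratic_lb {π : Measure (ℝ × ℝ)} (hp : IsProbabilityMeasure π)
    (h1 : π.map Prod.fst = lebI) (h2 : π.map Prod.snd = lebI) :
    (1:ℝ) / 3 ≤ ∫ p, quadSumCost p ∂(π.prod π) := by
  haveI := hp
  set S : Set (ℝ × ℝ) := Set.Icc (0:ℝ) 1 ×ˢ Set.Icc (0:ℝ) 1 with hSdef
  have haep : ∀ᵐ p ∂π, p ∈ S := by
    filter_upwards [ae_of_marginal measurable_fst h1, ae_of_marginal measurable_snd h2]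
      with p hx hy
    exact ⟨hx, hy⟩
  have haeq : ∀ᵐ q ∂(π.prod π), q.1 ∈ S ∧ q.2 ∈ S := ae_prod_mem haep
  have hSbd : ∀ p ∈ S, |p.1| ≤ 1 ∧ |p.2| ≤ 1 := by
    rintro p ⟨⟨h1', h2'⟩, ⟨h3', h4'⟩⟩
    constructor <;> rw [abs_le] <;> constructor <;> linarith
  -- the lower-bound function
  set g : (ℝ × ℝ) × (ℝ × ℝ) → ℝ := fun q =>
    (q.1.1 ^ 2 + q.1.2 ^ 2) + (q.2.1 ^ 2 + q.2.2 ^ 2) - (q.1.1 + q.1.2) * (q.2.1 + q.2.2)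
    with hgdef
  have hgle : ∀ q, g q ≤ quadSumCost q := by
    intro q; simp only [hgdef, quadSumCost]; nlinarith [sq_nonneg (q.1.1 - q.1.2), sq_nonneg (q.2.1 - q.2.2)]
  -- integrability over the product
  have haeqS : ∀ᵐ q ∂(π.prod π), q ∈ S ×ˢ S := haeq.mono fun q hq => ⟨hq.1, hq.2⟩
  have hIc : Integrable quadSumCost (π.prod π) := by
    refine integrable_of_bound_on (quadSumCost_continuous.aestronglyMeasurable) haeqS
      (C := 12) ?_
    rintro q ⟨hq1, hq2⟩
    obtain ⟨ha, hb⟩ := hSbd _ hq1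
    obtain ⟨hc, hd⟩ := hSbd _ hq2
    rw [Real.norm_eq_abs, abs_of_nonneg (quadSumCost_nonneg q)]
    have b1 := sub_sq_le ha hb
    have b2 := sub_sq_le ha hc
    have b3 := sub_sq_le ha hd
    have b4 := sub_sq_le hb hc
    have b5 := sub_sq_le hb hd
    have b6 := sub_sq_le hc hd
    simp only [quadSumCost]
    linarith
  have hIg : Integrable g (π.prod π) := by
    refine integrable_of_bound_on (Measurable.aestronglyMeasurable (by
      simp only [hgdef]; fun_prop)) haeqS (C := 8) ?_
    rintro q ⟨hq1, hq2⟩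
    obtain ⟨ha, hb⟩ := hSbd _ hq1
    obtain ⟨hc, hd⟩ := hSbd _ hq2
    rw [Real.norm_eq_abs, abs_le]
    rw [abs_le] at ha hb hc hd
    constructor <;> simp only [hgdef] <;> nlinarith
  have hmono : ∫ q, g q ∂(π.prod π) ≤ ∫ q, quadSumCost q ∂(π.prod π) :=
    integral_mono hIg hIc hgle
  -- now compute ∫ g
  -- marginal integrals
  have hfst : ∫ p, p.1 ∂π = 1 / 2 := by
    have := integral_map (μ := π) measurable_fst.aemeasurable
      (f := fun x : ℝ => x) aestronglyMeasurable_id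
    rw [h1, integral_lebI_id] at this
    exact this.symm
  have hsnd : ∫ p, p.2 ∂π = 1 / 2 := by
    have := integral_map (μ := π) measurable_snd.aemeasurable
      (f := fun x : ℝ => x) aestronglyMeasurable_id
    rw [h2, integral_lebI_id] at this
    exact this.symm
  have hfst2 : ∫ p, p.1 ^ 2 ∂π = 1 / 3 := by
    have := integral_map (μ := π) measurable_fst.aemeasurable
      (f := fun x : ℝ => x ^ 2) (Continuous.aestronglyMeasurable (by continuity))
    rw [h1, integral_lebI_sq] at this
    exact this.symm
  have hsnd2 : ∫ p, p.2 ^ 2 ∂π = 1 / 3 := by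
    have := integral_map (μ := π) measurable_snd.aemeasurable
      (f := fun x : ℝ => x ^ 2) (Continuous.aestronglyMeasurable (by continuity))
    rw [h2, integral_lebI_sq] at this
    exact this.symm
  -- integrability of the marginal pieces
  have hint : ∀ (f : ℝ × ℝ → ℝ), Measurable f → (∀ p ∈ S, ‖f p‖ ≤ 4) → Integrable f π :=
    fun f hf hb => integrable_of_bound_on hf.aestronglyMeasurable haep hb
  have hI1 : Integrable (fun p : ℝ × ℝ => p.1 ^ 2) π := by
    refine hint _ (by fun_prop) ?_
    intro p hpS; obtain ⟨ha, _⟩ := hSbd _ hpS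
    rw [Real.norm_eq_abs, abs_le]; rw [abs_le] at ha; constructor <;> nlinarith
  have hI2 : Integrable (fun p : ℝ × ℝ => p.2 ^ 2) π := by
    refine hint _ (by fun_prop) ?_
    intro p hpS; obtain ⟨_, hb⟩ := hSbd _ hpS
    rw [Real.norm_eq_abs, abs_le]; rw [abs_le] at hb; constructor <;> nlinarith
  have hsum : ∫ p, (p.1 ^ 2 + p.2 ^ 2) ∂π = 2 / 3 := by
    rw [integral_add hI1 hI2, hfst2, hsnd2]; norm_num
  have hs : ∫ p, (p.1 + p.2) ∂π = 1 := by
    have hIa : Integrable (fun p : ℝ × ℝ => p.1) π := by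
      refine hint _ (by fun_prop) ?_
      intro p hpS; obtain ⟨ha, _⟩ := hSbd _ hpS
      simpa [Real.norm_eq_abs] using le_trans ha (by norm_num)
    have hIb : Integrable (fun p : ℝ × ℝ => p.2) π := by
      refine hint _ (by fun_prop) ?_
      intro p hpS; obtain ⟨_, hb⟩ := hSbd _ hpS
      simpa [Real.norm_eq_abs] using le_trans hb (by norm_num)
    rw [integral_add hIa hIb, hfst, hsnd]; norm_num
  -- split ∫ g into the three pieces using product structure
  have hA : ∫ q : (ℝ × ℝ) × (ℝ × ℝ), (q.1.1 ^ 2 + q.1.2 ^ 2) ∂(π.prod π) = 2 / 3 := by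
    have := integral_prod_mul (μ := π) (ν := π)
      (f := fun p : ℝ × ℝ => p.1 ^ 2 + p.2 ^ 2) (g := fun _ : ℝ × ℝ => (1:ℝ))
    simpa [hsum] using this
  have hB : ∫ q : (ℝ × ℝ) × (ℝ × ℝ), (q.2.1 ^ 2 + q.2.2 ^ 2) ∂(π.prod π) = 2 / 3 := by
    have := integral_prod_mul (μ := π) (ν := π)
      (f := fun _ : ℝ × ℝ => (1:ℝ)) (g := fun p : ℝ × ℝ => p.1 ^ 2 + p.2 ^ 2)
    simpa [hsum] using this
  have hC : ∫ q : (ℝ × ℝ) × (ℝ × ℝ), (q.1.1 + q.1.2) * (q.2.1 + q.2.2) ∂(π.prod π) = 1 := by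
    have := integral_prod_mul (μ := π) (ν := π)
      (f := fun p : ℝ × ℝ => p.1 + p.2) (g := fun p : ℝ × ℝ => p.1 + p.2)
    simpa [hs] using this
  have hIA : Integrable (fun q : (ℝ × ℝ) × (ℝ × ℝ) => q.1.1 ^ 2 + q.1.2 ^ 2) (π.prod π) := by
    refine integrable_of_bound_on (Measurable.aestronglyMeasurable (by fun_prop)) haeqS (C := 4) ?_
    rintro q ⟨hq1, _⟩
    obtain ⟨ha, hb⟩ := hSbd _ hq1
    rw [Real.norm_eq_abs, abs_le]; rw [abs_le] at ha hb; constructor <;> nlinarith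
  have hIB : Integrable (fun q : (ℝ × ℝ) × (ℝ × ℝ) => q.2.1 ^ 2 + q.2.2 ^ 2) (π.prod π) := by
    refine integrable_of_bound_on (Measurable.aestronglyMeasurable (by fun_prop)) haeqS (C := 4) ?_
    rintro q ⟨_, hq2⟩
    obtain ⟨ha, hb⟩ := hSbd _ hq2
    rw [Real.norm_eq_abs, abs_le]; rw [abs_le] at ha hb; constructor <;> nlinarith
  have hIC : Integrable (fun q : (ℝ × ℝ) × (ℝ × ℝ) => (q.1.1 + q.1.2) * (q.2.1 + q.2.2))
      (π.prod π) := by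
    refine integrable_of_bound_on (Measurable.aestronglyMeasurable (by fun_prop)) haeqS (C := 4) ?_
    rintro q ⟨hq1, hq2⟩
    obtain ⟨ha, hb⟩ := hSbd _ hq1
    obtain ⟨hc, hd⟩ := hSbd _ hq2
    rw [Real.norm_eq_abs, abs_le]; rw [abs_le] at ha hb hc hd; constructor <;> nlinarith
  have hg : ∫ q, g q ∂(π.prod π) = 1 / 3 := by
    simp only [hgdef]
    have hIAB : Integrable
        (fun q : (ℝ × ℝ) × (ℝ × ℝ) => q.1.1 ^ 2 + q.1.2 ^ 2 + (q.2.1 ^ 2 + q.2.2 ^ 2))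
        (π.prod π) := hIA.add hIB
    rw [integral_sub hIAB hIC, integral_add hIA hIB, hA, hB, hC]
    norm_num
  linarith
/-- The multi-marginal infimum is `0`, the quadratic transportation infimum is
strictly positive; in particular the former is strictly smaller. -/
theorem multiMarginal_lt_quadratic :
    sInf multiMarginalValues = 0 ∧ 0 < sInf quadraticValues ∧
      sInf multiMarginalValues < sInf quadraticValues := by
  haveI := lebI_prob
  -- the diagonal measures
  have hd : Measurable (fun x : ℝ => ((x, x), (x, x))) := by fun_prop
  set γ : Measure ((ℝ × ℝ) × (ℝ × ℝ)) := lebI.map (fun x => ((x, x), (x, x))) with hγdef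
  have h0mem : (0:ℝ) ∈ multiMarginalValues := by
    refine ⟨γ, Measure.isProbabilityMeasure_map hd.aemeasurable, ?_, ?_, ?_, ?_, ?_⟩
    · rw [hγdef, Measure.map_map (by fun_prop) hd]
      exact Measure.map_id
    · rw [hγdef, Measure.map_map (by fun_prop) hd]
      exact Measure.map_id
    · rw [hγdef, Measure.map_map (by fun_prop) hd]
      exact Measure.map_id
    · rw [hγdef, Measure.map_map (by fun_prop) hd]
      exact Measure.map_id
    · rw [hγdef, integral_map hd.aemeasurable
        quadSumCost_continuous.aestronglyMeasurable]
      simp [quadSumCost]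
  have hlb : ∀ r ∈ multiMarginalValues, (0:ℝ) ≤ r := by
    rintro r ⟨γ', _, _, _, _, _, rfl⟩
    exact integral_nonneg quadSumCost_nonneg
  have hA : sInf multiMarginalValues = 0 :=
    le_antisymm (csInf_le ⟨0, hlb⟩ h0mem) (le_csInf ⟨0, h0mem⟩ hlb)
  -- quadratic side
  have hdm : Measurable (fun x : ℝ => (x, x)) := by fun_prop
  set π₀ : Measure (ℝ × ℝ) := lebI.map (fun x => (x, x)) with hπdef
  have hπmem : (∫ p, quadSumCost p ∂(π₀.prod π₀)) ∈ quadraticValues := by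
    refine ⟨π₀, Measure.isProbabilityMeasure_map hdm.aemeasurable, ?_, ?_, rfl⟩
    · rw [hπdef, Measure.map_map measurable_fst hdm]
      exact Measure.map_id
    · rw [hπdef, Measure.map_map measurable_snd hdm]
      exact Measure.map_id
  have hqlb : ∀ r ∈ quadraticValues, (1:ℝ) / 3 ≤ r := by
    rintro r ⟨π, hp, h1, h2, rfl⟩
    exact quadratic_lb hp h1 h2
  have hB : (1:ℝ) / 3 ≤ sInf quadraticValues := le_csInf ⟨_, hπmem⟩ hqlb
  exact ⟨hA, by linarith, by rw [hA]; linarith⟩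
end

section
/- If c is symmetric and positive definite, meaning ∬ c dρ dρ > 0 for every nonzero finite signed Borel measure ρ with zero total mass, then the minimizer of the quadratic total cost ∬ c dπ dπ over Π(μ,ν) is unique. -/
open MeasureTheory Filter Topology
open scoped NNReal ENNReal

/-- The double integral `∬ c dα dβ` of a cost against a pair of measures. -/
noncomputable def pairCost {Z : Type*} [MeasurableSpace Z]
    (c : Z × Z → ℝ) (α β : Measure Z) : ℝ :=
  ∫ p, c p ∂(α.prod β)

/-- The double integral `∬ c dρ dρ` of a cost against a finite signed measure,
via its Jordan decomposition `ρ = ρ⁺ − ρ⁻`. -/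
noncomputable def signedDouble {Z : Type*} [MeasurableSpace Z]
    (c : Z × Z → ℝ) (ρ : SignedMeasure Z) : ℝ :=
  pairCost c ρ.toJordanDecomposition.posPart ρ.toJordanDecomposition.posPart
    - pairCost c ρ.toJordanDecomposition.posPart ρ.toJordanDecomposition.negPart
    - pairCost c ρ.toJordanDecomposition.negPart ρ.toJordanDecomposition.posPart
    + pairCost c ρ.toJordanDecomposition.negPart ρ.toJordanDecomposition.negPart

lemma pairCost_add_left {Z : Type*} [MeasurableSpace Z] (c : Z × Z → ℝ)
    (α α' β : Measure Z) [SFinite α] [SFinite α'] [SFinite β]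
    (h : Integrable c (α.prod β)) (h' : Integrable c (α'.prod β)) :
    pairCost c (α + α') β = pairCost c α β + pairCost c α' β := by
  rw [pairCost, Measure.add_prod, integral_add_measure h h']; rfl

lemma pairCost_add_right {Z : Type*} [MeasurableSpace Z] (c : Z × Z → ℝ)
    (α β β' : Measure Z) [SFinite α] [SFinite β] [SFinite β']
    (h : Integrable c (α.prod β)) (h' : Integrable c (α.prod β')) :
    pairCost c α (β + β') = pairCost c α β + pairCost c α β' := by
  rw [pairCost, Measure.prod_add, integral_add_measure h h']; rfl

lemma smul_prod' {Z : Type*} [MeasurableSpace Z] (r : ℝ≥0)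
    (α β : Measure Z) [IsFiniteMeasure α] [IsFiniteMeasure β] :
    (r • α).prod β = r • α.prod β := by
  refine Measure.prod_eq (fun s t hs ht => ?_)
  rw [Measure.smul_apply, Measure.smul_apply, Measure.prod_prod, ENNReal.smul_def, ENNReal.smul_def, smul_eq_mul, smul_eq_mul, mul_assoc]

lemma prod_smul' {Z : Type*} [MeasurableSpace Z] (r : ℝ≥0)
    (α β : Measure Z) [IsFiniteMeasure α] [IsFiniteMeasure β] :
    α.prod (r • β) = r • α.prod β := by
  refine Measure.prod_eq (fun s t hs ht => ?_)
  rw [Measure.smul_apply, Measure.smul_apply, Measure.prod_prod, ENNReal.smul_def, ENNReal.smul_def, smul_eq_mul, smul_eq_mul]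
  ring

lemma pairCost_smul_left {Z : Type*} [MeasurableSpace Z] (c : Z × Z → ℝ) (r : ℝ≥0)
    (α β : Measure Z) [IsFiniteMeasure α] [IsFiniteMeasure β] :
    pairCost c (r • α) β = (r : ℝ) * pairCost c α β := by
  rw [pairCost, smul_prod', integral_smul_nnreal_measure]; rfl

lemma pairCost_smul_right {Z : Type*} [MeasurableSpace Z] (c : Z × Z → ℝ) (r : ℝ≥0)
    (α β : Measure Z) [IsFiniteMeasure α] [IsFiniteMeasure β] :
    pairCost c α (r • β) = (r : ℝ) * pairCost c α β := by
  rw [pairCost, prod_smul', integral_smul_nnreal_measure]; rfl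

/-- If the symmetric continuous cost `c` is positive definite (i.e.
`∬ c dρ dρ > 0` for every nonzero finite signed measure `ρ` of total mass
zero), then the minimizer of the quadratic total cost over `Π(μ,ν)` is
unique. -/
theorem quadratic_minimizer_unique_of_posDef
    {X Y : Type*}
    [TopologicalSpace X] [PolishSpace X] [CompactSpace X]
    [MeasurableSpace X] [BorelSpace X]
    [TopologicalSpace Y] [PolishSpace Y] [CompactSpace Y]
    [MeasurableSpace Y] [BorelSpace Y]
    (μ : Measure X) (ν : Measure Y)
    [IsProbabilityMeasure μ] [IsProbabilityMeasure ν]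
    (c : (X × Y) × (X × Y) → ℝ) (hc : Continuous c)
    (hsym : ∀ z w, c (z, w) = c (w, z))
    (hpd : ∀ ρ : SignedMeasure (X × Y), ρ ≠ 0 → ρ Set.univ = 0 →
      0 < signedDouble c ρ)
    (π1 π2 : Measure (X × Y))
    (hπ1p : IsProbabilityMeasure π1) (hπ2p : IsProbabilityMeasure π2)
    (h11 : π1.map Prod.fst = μ) (h12 : π1.map Prod.snd = ν)
    (h21 : π2.map Prod.fst = μ) (h22 : π2.map Prod.snd = ν)
    (hmin1 : ∀ ρ : Measure (X × Y), IsProbabilityMeasure ρ →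
      ρ.map Prod.fst = μ → ρ.map Prod.snd = ν →
      pairCost c π1 π1 ≤ pairCost c ρ ρ)
    (hmin2 : ∀ ρ : Measure (X × Y), IsProbabilityMeasure ρ →
      ρ.map Prod.fst = μ → ρ.map Prod.snd = ν →
      pairCost c π2 π2 ≤ pairCost c ρ ρ) :
    π1 = π2 := by
  by_contra hne
  haveI := hπ1p; haveI := hπ2p
  -- integrability of c against any finite product measure
  have hInt : ∀ (α β : Measure (X × Y)) [IsFiniteMeasure α] [IsFiniteMeasure β],
      Integrable c (α.prod β) := fun α β _ _ =>
    hc.integrable_of_hasCompactSupport (HasCompactSupport.of_compactSpace c)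
  set B : Measure (X × Y) → Measure (X × Y) → ℝ := pairCost c with hB
  -- the signed difference
  set ρ : SignedMeasure (X × Y) := π1.toSignedMeasure - π2.toSignedMeasure with hρ
  have hρne : ρ ≠ 0 := by
    intro h
    apply hne
    have := sub_eq_zero.mp (hρ ▸ h)
    exact (Measure.toSignedMeasure_eq_toSignedMeasure_iff).mp this
  have hρuniv : ρ Set.univ = 0 := by
    rw [hρ, VectorMeasure.sub_apply,
      Measure.toSignedMeasure_apply_measurable MeasurableSet.univ,
      Measure.toSignedMeasure_apply_measurable MeasurableSet.univ]
    simp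
  have hD := hpd ρ hρne hρuniv
  set p : Measure (X × Y) := ρ.toJordanDecomposition.posPart with hp
  set n : Measure (X × Y) := ρ.toJordanDecomposition.negPart with hn
  -- key measure identity : p + π2 = n + π1
  have hkey : p + π2 = n + π1 := by
    rw [← Measure.toSignedMeasure_eq_toSignedMeasure_iff,
      Measure.toSignedMeasure_add, Measure.toSignedMeasure_add]
    have hJ : p.toSignedMeasure - n.toSignedMeasure = ρ :=
      ρ.toSignedMeasure_toJordanDecomposition
    have : p.toSignedMeasure - n.toSignedMeasure
        = π1.toSignedMeasure - π2.toSignedMeasure := by rw [hJ, hρ]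
    linear_combination (norm := abel) this
  -- additivity consequences
  have hadd_left : ∀ β : Measure (X × Y), IsFiniteMeasure β →
      B p β + B π2 β = B n β + B π1 β := by
    intro β hβ
    rw [hB, ← pairCost_add_left c p π2 β (hInt _ _) (hInt _ _),
      ← pairCost_add_left c n π1 β (hInt _ _) (hInt _ _), hkey]
  have hadd_right : ∀ α : Measure (X × Y), IsFiniteMeasure α →
      B α p + B α π2 = B α n + B α π1 := by
    intro α hα
    rw [hB, ← pairCost_add_right c α p π2 (hInt _ _) (hInt _ _),
      ← pairCost_add_right c α n π1 (hInt _ _) (hInt _ _), hkey]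
  have hDval : signedDouble c ρ = B π1 π1 - B π1 π2 - B π2 π1 + B π2 π2 := by
    have h1 := hadd_right p inferInstance
    have h2 := hadd_right n inferInstance
    have h3 := hadd_left π1 inferInstance
    have h4 := hadd_left π2 inferInstance
    rw [signedDouble, ← hp, ← hn, ← hB]
    linarith
  -- midpoint measure
  set r : ℝ≥0 := 2⁻¹ with hr
  set π : Measure (X × Y) := r • π1 + r • π2 with hπ
  have hrR : ((r : ℝ)) = 1/2 := by rw [hr]; simp
  have hrr : ((r : ℝ≥0∞)) + ((r : ℝ≥0∞)) = 1 := by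
    rw [hr]; push_cast; exact ENNReal.inv_two_add_inv_two
  have hrr2 : r + r = 1 := by
    rw [hr]; rw [← two_mul]; simp
  have hπprob : IsProbabilityMeasure π := by
    constructor
    rw [hπ]
    simp only [Measure.add_apply, Measure.smul_apply, measure_univ, smul_eq_mul, mul_one,
      ENNReal.smul_def]
    exact hrr
  haveI := hπprob
  have hmapfst : π.map Prod.fst = μ := by
    rw [hπ, Measure.map_add _ _ measurable_fst, Measure.map_smul, Measure.map_smul,
      h11, h21, ← add_smul, hrr2, one_smul]
  have hmapsnd : π.map Prod.snd = ν := by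
    rw [hπ, Measure.map_add _ _ measurable_snd, Measure.map_smul, Measure.map_smul,
      h12, h22, ← add_smul, hrr2, one_smul]
  -- cost of midpoint
  have hexp : ∀ α : Measure (X × Y), IsFiniteMeasure α →
      B α π = (r : ℝ) * B α π1 + (r : ℝ) * B α π2 := by
    intro α hα
    rw [hB, hπ, pairCost_add_right c α _ _ (hInt _ _) (hInt _ _),
      pairCost_smul_right, pairCost_smul_right]
  have hcost : B π π = (1/4) * (B π1 π1 + B π1 π2 + B π2 π1 + B π2 π2) := by
    have e1 : B π π = (r : ℝ) * B π1 π + (r : ℝ) * B π2 π := by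
      conv_lhs => rw [hB, hπ]
      rw [pairCost_add_left c _ _ _ (hInt _ _) (hInt _ _),
        pairCost_smul_left, pairCost_smul_left, ← hπ, ← hB]
    rw [e1, hexp π1 inferInstance, hexp π2 inferInstance, hrR]
    ring
  have hle : B π1 π1 ≤ B π π := hmin1 π hπprob hmapfst hmapsnd
  have hle2 : B π2 π2 ≤ B π1 π1 := hmin2 π1 hπ1p h11 h12
  rw [hDval] at hD
  linarith
end

section
/- With S : Z × W → ℝ continuous and bounded, Z compact Polish, and (W,ω) a finite measure space, the set S_{Π(μ,ν)} = { w ↦ ∫ S(z,w) dπ(z) : π ∈ Π(μ,ν) } is sequentially compact in the strong L²(ω) topology: every sequence in S_{Π(μ,ν)} has a subsequence converging in L²(ω)-norm to an element of S_{Π(μ,ν)}. -/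
open MeasureTheory Filter Topology TopologicalSpace BoundedContinuousFunction Set ENNReal NNReal

set_option maxHeartbeats 1000000

namespace SPiAux

variable {Z : Type*} [TopologicalSpace Z] [CompactSpace Z]

lemma cm_integrable [MeasurableSpace Z] [OpensMeasurableSpace Z] (f : C(Z, ℝ)) (m : Measure Z)
    [IsFiniteMeasure m] : Integrable f m := (mkOfCompact f).integrable m

/-- test functions for a set `K`. -/
def IsTest (K : Set Z) (f : C(Z, ℝ)) : Prop :=
  (∀ x, 0 ≤ f x) ∧ (∀ x, f x ≤ 1) ∧ ∀ x ∈ K, f x = 1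

def testSet (Λ : C(Z, ℝ) → ℝ) (K : Set Z) : Set ℝ :=
  {r | ∃ f : C(Z, ℝ), IsTest K f ∧ Λ f = r}

noncomputable def cfn (Λ : C(Z, ℝ) → ℝ) (K : Set Z) : ℝ := sInf (testSet Λ K)

variable (Λ : C(Z, ℝ) → ℝ)

lemma one_isTest (K : Set Z) : IsTest K (1 : C(Z, ℝ)) :=
  ⟨fun x => by simp, fun x => by simp, fun x _ => by simp⟩

lemma testSet_nonempty (K : Set Z) : (testSet Λ K).Nonempty :=
  ⟨Λ 1, 1, one_isTest K, rfl⟩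

section props

variable (hnn : ∀ f : C(Z, ℝ), (∀ z, 0 ≤ f z) → 0 ≤ Λ f)

include hnn

lemma testSet_bddBelow (K : Set Z) : BddBelow (testSet Λ K) :=
  ⟨0, fun r ⟨f, hf, hr⟩ => hr ▸ hnn f hf.1⟩

lemma cfn_nonneg (K : Set Z) : 0 ≤ cfn Λ K :=
  le_csInf (testSet_nonempty Λ K) (fun r ⟨f, hf, hr⟩ => hr ▸ hnn f hf.1)

lemma cfn_le (K : Set Z) {f : C(Z, ℝ)} (hf : IsTest K f) : cfn Λ K ≤ Λ f :=
  csInf_le (testSet_bddBelow Λ hnn K) ⟨f, hf, rfl⟩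

lemma cfn_mono {K₁ K₂ : Set Z} (h : K₁ ⊆ K₂) : cfn Λ K₁ ≤ cfn Λ K₂ :=
  csInf_le_csInf (testSet_bddBelow Λ hnn K₁) (testSet_nonempty Λ K₂)
    (fun r ⟨f, hf, hr⟩ => ⟨f, ⟨hf.1, hf.2.1, fun x hx => hf.2.2 x (h hx)⟩, hr⟩)

lemma cfn_le_one (K : Set Z) (hone : Λ 1 = 1) : cfn Λ K ≤ 1 := by
  simpa [hone] using cfn_le Λ hnn K (one_isTest K)

variable (hadd : ∀ f g, Λ (f + g) = Λ f + Λ g)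
  (hmono : ∀ f g : C(Z, ℝ), (∀ z, f z ≤ g z) → Λ f ≤ Λ g)

include hadd hmono

lemma cfn_union_le (K₁ K₂ : Set Z) : cfn Λ (K₁ ∪ K₂) ≤ cfn Λ K₁ + cfn Λ K₂ := by
  refine le_of_forall_pos_le_add (fun ε hε => ?_)
  obtain ⟨r₁, ⟨f₁, hf₁, rfl⟩, hr₁⟩ := exists_lt_of_csInf_lt (testSet_nonempty Λ K₁)
    (lt_add_of_pos_right (cfn Λ K₁) (by positivity : (0:ℝ) < ε / 2))
  obtain ⟨r₂, ⟨f₂, hf₂, rfl⟩, hr₂⟩ := exists_lt_of_csInf_lt (testSet_nonempty Λ K₂)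
    (lt_add_of_pos_right (cfn Λ K₂) (by positivity : (0:ℝ) < ε / 2))
  set h : C(Z, ℝ) := ContinuousMap.mk (fun x => min (f₁ x + f₂ x) 1)
    ((f₁.continuous.add f₂.continuous).min continuous_const) with hh
  have htest : IsTest (K₁ ∪ K₂) h := by
    refine ⟨fun x => le_min (add_nonneg (hf₁.1 x) (hf₂.1 x)) one_pos.le,
      fun x => min_le_right _ _, fun x hx => ?_⟩
    rcases hx with hx | hx
    · have : (1:ℝ) ≤ f₁ x + f₂ x := by
        have := hf₁.2.2 x hx; have := hf₂.1 x; linarith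
      simp [hh, min_eq_right this]
    · have : (1:ℝ) ≤ f₁ x + f₂ x := by
        have := hf₂.2.2 x hx; have := hf₁.1 x; linarith
      simp [hh, min_eq_right this]
  have h1 : cfn Λ (K₁ ∪ K₂) ≤ Λ h := cfn_le Λ hnn _ htest
  have h2 : Λ h ≤ Λ (f₁ + f₂) := hmono _ _ (fun z => by simp [hh, min_le_left])
  have h3 : Λ (f₁ + f₂) = Λ f₁ + Λ f₂ := hadd _ _
  linarith

lemma cfn_union_eq [NormalSpace Z] {K₁ K₂ : Set Z} (h₁ : IsClosed K₁) (h₂ : IsClosed K₂)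
    (hd : Disjoint K₁ K₂) : cfn Λ (K₁ ∪ K₂) = cfn Λ K₁ + cfn Λ K₂ := by
  refine le_antisymm (cfn_union_le Λ hnn hadd hmono K₁ K₂) ?_
  refine le_csInf (testSet_nonempty Λ _) ?_
  rintro r ⟨f, hf, rfl⟩
  obtain ⟨g, hg0, hg1, hg01⟩ := exists_continuous_zero_one_of_isClosed h₂ h₁ hd.symm
  have htest₁ : IsTest K₁ (f * g) := by
    refine ⟨fun x => mul_nonneg (hf.1 x) (hg01 x).1,
      fun x => mul_le_one₀ (hf.2.1 x) (hg01 x).1 (hg01 x).2, fun x hx => ?_⟩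
    have h1 : f x = 1 := hf.2.2 x (Or.inl hx)
    have h2 : g x = 1 := hg1 hx
    simp [h1, h2]
  have htest₂ : IsTest K₂ (f - f * g) := by
    have hrw : ∀ x, (f - f * g) x = f x * (1 - g x) := fun x => by
      simp [mul_comm]; ring
    refine ⟨fun x => (hrw x) ▸ mul_nonneg (hf.1 x) (by linarith [(hg01 x).2]),
      fun x => (hrw x) ▸ ?_, fun x hx => ?_⟩
    · have := hf.2.1 x; have := hf.1 x; have := (hg01 x).1; have := (hg01 x).2
      nlinarith
    · have h1 : f x = 1 := hf.2.2 x (Or.inr hx)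
      have h2 : g x = 0 := hg0 hx
      simp [hrw x, h1, h2]
  have hsum : f * g + (f - f * g) = f := by ext x; simp
  have := hadd (f * g) (f - f * g)
  rw [hsum] at this
  have hA := cfn_le Λ hnn _ htest₁
  have hB := cfn_le Λ hnn _ htest₂
  linarith

end props

section content

variable [T2Space Z] [NormalSpace Z]
variable (Λ : C(Z, ℝ) → ℝ)
  (hnn : ∀ f : C(Z, ℝ), (∀ z, 0 ≤ f z) → 0 ≤ Λ f)
  (hadd : ∀ f g, Λ (f + g) = Λ f + Λ g)
  (hmono : ∀ f g : C(Z, ℝ), (∀ z, f z ≤ g z) → Λ f ≤ Λ g)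
  (hone : Λ 1 = 1)

/-- The content associated with the functional `Λ`. -/
noncomputable def lamContent : Content Z where
  toFun K := Real.toNNReal (cfn Λ K)
  mono' K₁ K₂ h := Real.toNNReal_mono (cfn_mono Λ hnn h)
  sup_disjoint' K₁ K₂ hd h₁ h₂ := by
    have := cfn_union_eq Λ hnn hadd hmono (Z := Z) h₁ h₂ hd
    simp only [Compacts.coe_sup]
    rw [this, Real.toNNReal_add (cfn_nonneg Λ hnn _) (cfn_nonneg Λ hnn _)]
  sup_le' K₁ K₂ := by
    have h := cfn_union_le Λ hnn hadd hmono (K₁ : Set Z) (K₂ : Set Z)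
    calc Real.toNNReal (cfn Λ (↑(K₁ ⊔ K₂)))
        ≤ Real.toNNReal (cfn Λ (K₁ : Set Z) + cfn Λ (K₂ : Set Z)) := Real.toNNReal_mono h
      _ = _ := Real.toNNReal_add (cfn_nonneg Λ hnn _) (cfn_nonneg Λ hnn _)

lemma lamContent_apply (K : Compacts Z) :
    (lamContent Λ hnn hadd hmono) K = ENNReal.ofReal (cfn Λ (K : Set Z)) := rfl

include hnn hmono hone in
lemma cfn_univ : cfn Λ (univ : Set Z) = 1 := by
  refine le_antisymm (cfn_le_one Λ hnn _ hone) ?_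
  refine le_csInf (testSet_nonempty Λ _) ?_
  rintro r ⟨f, hf, rfl⟩
  have : Λ 1 ≤ Λ f := hmono _ _ (fun z => by
    have := hf.2.2 z (mem_univ z); simp [this])
  simpa [hone] using this

variable [MeasurableSpace Z] [BorelSpace Z]

/-- The representing measure. -/
noncomputable def lamMeasure : Measure Z := (lamContent Λ hnn hadd hmono).measure

include hone in
lemma lamMeasure_isProbability : IsProbabilityMeasure (lamMeasure Λ hnn hadd hmono) := by
  constructor
  have h1 : (lamMeasure Λ hnn hadd hmono) univ
      = (lamContent Λ hnn hadd hmono).innerContent ⟨univ, isOpen_univ⟩ := by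
    rw [lamMeasure, Content.measure_apply _ MeasurableSet.univ,
      Content.outerMeasure_of_isOpen _ _ isOpen_univ]
  rw [h1]
  have htop : (lamContent Λ hnn hadd hmono) ⟨univ, isCompact_univ⟩ = 1 := by
    rw [lamContent_apply]
    simp only [Compacts.coe_mk]
    rw [cfn_univ Λ hnn hmono hone]
    simp
  refine le_antisymm ?_ ?_
  · calc (lamContent Λ hnn hadd hmono).innerContent ⟨univ, isOpen_univ⟩
        ≤ (lamContent Λ hnn hadd hmono) ⟨univ, isCompact_univ⟩ :=
          Content.innerContent_le _ _ _ subset_rfl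
      _ = 1 := htop
  · calc (1 : ℝ≥0∞) = (lamContent Λ hnn hadd hmono) ⟨univ, isCompact_univ⟩ := htop.symm
      _ ≤ _ := Content.le_innerContent _ _ _ subset_rfl

lemma lamMeasure_open_le {G : Set Z} (hG : IsOpen G) {l : Filter ℕ} [l.NeBot]
    (ms : ℕ → Measure Z) (hms : ∀ k, IsProbabilityMeasure (ms k))
    (hconv : ∀ f : C(Z, ℝ), Tendsto (fun k => ∫ z, f z ∂ms k) l (𝓝 (Λ f))) :
    lamMeasure Λ hnn hadd hmono G ≤ l.liminf (fun k => ms k G) := by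
  have h1 : (lamMeasure Λ hnn hadd hmono) G
      = (lamContent Λ hnn hadd hmono).innerContent ⟨G, hG⟩ := by
    rw [lamMeasure, Content.measure_apply _ hG.measurableSet,
      Content.outerMeasure_of_isOpen _ _ hG]
  rw [h1]
  refine iSup_le fun K => iSup_le fun hKG => ?_
  -- Urysohn function: 1 on K, 0 outside G
  obtain ⟨f, hf0, hf1, hf01⟩ := exists_continuous_zero_one_of_isClosed
    (hG.isClosed_compl) K.isCompact.isClosed
    (disjoint_compl_left_iff.mpr hKG)
  have htest : IsTest (K : Set Z) f := ⟨fun x => (hf01 x).1, fun x => (hf01 x).2, fun x hx => hf1 hx⟩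
  have hcle : cfn Λ (K : Set Z) ≤ Λ f := cfn_le Λ hnn _ htest
  -- pointwise bound on integrals
  have hint : ∀ k, ∫ z, f z ∂ms k ≤ (ms k G).toReal := by
    intro k
    have := hms k
    have hind : Integrable (G.indicator (fun _ => (1:ℝ))) (ms k) :=
      (integrable_indicator_iff hG.measurableSet).2 (integrableOn_const (measure_ne_top _ _))
    have hle : ∀ z, f z ≤ G.indicator (fun _ => (1:ℝ)) z := by
      intro z
      by_cases hz : z ∈ G
      · simpa [hz] using (hf01 z).2
      · have : f z = 0 := hf0 hz
        simp [hz, this]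
    calc ∫ z, f z ∂ms k ≤ ∫ z, G.indicator (fun _ => (1:ℝ)) z ∂ms k :=
          integral_mono (cm_integrable f _) hind hle
      _ = (ms k G).toReal := by
          rw [integral_indicator_const _ hG.measurableSet]; simp [Measure.real]
  have hofreal : ENNReal.ofReal (Λ f) ≤ l.liminf (fun k => ms k G) := by
    have htendsto : Tendsto (fun k => ENNReal.ofReal (∫ z, f z ∂ms k)) l
        (𝓝 (ENNReal.ofReal (Λ f))) := (ENNReal.continuous_ofReal.tendsto _).comp (hconv f)
    have hliminf_eq : l.liminf (fun k => ENNReal.ofReal (∫ z, f z ∂ms k)) = ENNReal.ofReal (Λ f) :=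
      htendsto.liminf_eq
    rw [← hliminf_eq]
    refine Filter.liminf_le_liminf (Eventually.of_forall fun k => ?_)
    exact ENNReal.ofReal_le_of_le_toReal (hint k)
  calc (lamContent Λ hnn hadd hmono) K = ENNReal.ofReal (cfn Λ (K : Set Z)) :=
        lamContent_apply Λ hnn hadd hmono K
    _ ≤ ENNReal.ofReal (Λ f) := ENNReal.ofReal_le_ofReal hcle
    _ ≤ _ := hofreal

end content

section weaklimit

variable {Z : Type*} [TopologicalSpace Z] [PolishSpace Z] [CompactSpace Z]
  [MeasurableSpace Z] [BorelSpace Z]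

theorem exists_weak_limit (π : ℕ → Measure Z) (hπ : ∀ k, IsProbabilityMeasure (π k)) :
    ∃ (φ : ℕ → ℕ) (π0 : Measure Z), StrictMono φ ∧ IsProbabilityMeasure π0 ∧
      ∀ f : Z →ᵇ ℝ, Tendsto (fun k => ∫ z, f z ∂π (φ k)) atTop (𝓝 (∫ z, f z ∂π0)) := by
  letI := upgradeIsCompletelyMetrizable Z
  -- dense sequence in C(Z,ℝ)
  obtain ⟨e, he⟩ := exists_dense_seq C(Z, ℝ)
  -- diagonal extraction
  have hmem : ∀ k, (fun n => ∫ z, e n z ∂π k) ∈ Set.pi univ (fun n => Icc (-‖e n‖) (‖e n‖)) := by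
    intro k n _
    have := hπ k
    have hb : ‖∫ z, e n z ∂π k‖ ≤ ‖e n‖ := by
      simpa using norm_integral_le_of_norm_le_const (μ := π k)
        (.of_forall fun z => (e n).norm_coe_le_norm z)
    rw [Real.norm_eq_abs, abs_le] at hb
    exact ⟨hb.1, hb.2⟩
  obtain ⟨g, -, φ, hφ, hconv⟩ :=
    (isCompact_univ_pi (fun n => isCompact_Icc)).tendsto_subseq hmem
  have hn : ∀ n, Tendsto (fun k => ∫ z, e n z ∂π (φ k)) atTop (𝓝 (g n)) :=
    tendsto_pi_nhds.mp hconv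
  -- convergence for every continuous function
  have key : ∀ f : C(Z, ℝ), ∃ l, Tendsto (fun k => ∫ z, f z ∂π (φ k)) atTop (𝓝 l) := by
    intro f
    have hcauchy : CauchySeq (fun k => ∫ z, f z ∂π (φ k)) := by
      rw [Metric.cauchySeq_iff]
      intro ε hε
      obtain ⟨n, hn'⟩ := he.exists_dist_lt f (by positivity : (0:ℝ) < ε / 4)
      have hC : CauchySeq (fun k => ∫ z, e n z ∂π (φ k)) := (hn n).cauchySeq
      rw [Metric.cauchySeq_iff] at hC
      obtain ⟨N, hN⟩ := hC (ε / 2) (by positivity)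
      refine ⟨N, fun a ha b hb => ?_⟩
      have hfe : ∀ k, dist (∫ z, f z ∂π (φ k)) (∫ z, e n z ∂π (φ k)) ≤ ε / 4 := by
        intro k
        have := hπ (φ k)
        rw [dist_eq_norm, ← integral_sub (cm_integrable f _) (cm_integrable (e n) _)]
        have hb : ∀ z, ‖f z - e n z‖ ≤ ε / 4 := by
          intro z
          calc ‖f z - e n z‖ = ‖(f - e n) z‖ := by simp
            _ ≤ ‖f - e n‖ := (f - e n).norm_coe_le_norm z
            _ ≤ ε / 4 := le_of_lt (by rwa [← dist_eq_norm])
        simpa using norm_integral_le_of_norm_le_const (μ := π (φ k)) (.of_forall hb)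
      have h1 := hfe a
      have h2 := hfe b
      have h3 := hN a ha b hb
      calc dist (∫ z, f z ∂π (φ a)) (∫ z, f z ∂π (φ b))
          ≤ dist (∫ z, f z ∂π (φ a)) (∫ z, e n z ∂π (φ a)) +
            dist (∫ z, e n z ∂π (φ a)) (∫ z, e n z ∂π (φ b)) +
            dist (∫ z, e n z ∂π (φ b)) (∫ z, f z ∂π (φ b)) := dist_triangle4 _ _ _ _
        _ < ε := by rw [dist_comm (∫ z, e n z ∂π (φ b))] at *; linarith
    exact cauchySeq_tendsto_of_complete hcauchy
  choose Λ hΛ using key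
  -- properties of the limit functional
  have hnn : ∀ f : C(Z, ℝ), (∀ z, 0 ≤ f z) → 0 ≤ Λ f := by
    intro f hf
    exact ge_of_tendsto (hΛ f) (Eventually.of_forall fun k => integral_nonneg hf)
  have hmono : ∀ f g : C(Z, ℝ), (∀ z, f z ≤ g z) → Λ f ≤ Λ g := by
    intro f g hfg
    refine le_of_tendsto_of_tendsto' (hΛ f) (hΛ g) fun k => ?_
    have := hπ (φ k)
    exact integral_mono (cm_integrable f _) (cm_integrable g _) hfg
  have hadd : ∀ f g, Λ (f + g) = Λ f + Λ g := by
    intro f g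
    refine tendsto_nhds_unique (hΛ (f + g)) ?_
    have h := (hΛ f).add (hΛ g)
    have : (fun k => ∫ z, (f + g) z ∂π (φ k)) =
        fun k => (∫ z, f z ∂π (φ k)) + ∫ z, g z ∂π (φ k) := by
      funext k
      have := hπ (φ k)
      rw [← integral_add (cm_integrable f _) (cm_integrable g _)]
      rfl
    rw [this]
    exact h
  have hone : Λ 1 = 1 := by
    refine tendsto_nhds_unique (hΛ 1) ?_
    have : (fun k => ∫ z, (1 : C(Z, ℝ)) z ∂π (φ k)) = fun _ => (1:ℝ) := by
      funext k
      have := hπ (φ k)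
      simp
    rw [this]
    exact tendsto_const_nhds
  -- the representing measure
  set π0 : Measure Z := lamMeasure Λ hnn hadd hmono with hπ0
  have hπ0prob : IsProbabilityMeasure π0 := lamMeasure_isProbability Λ hnn hadd hmono hone
  -- convergence in the space of probability measures
  set P : ℕ → ProbabilityMeasure Z := fun k => ⟨π (φ k), hπ (φ k)⟩ with hP
  set P0 : ProbabilityMeasure Z := ⟨π0, hπ0prob⟩ with hP0def
  have h_opens : ∀ G, IsOpen G → P0 G ≤ atTop.liminf (fun k => P k G) := by
    intro G hG
    have hE : π0 G ≤ atTop.liminf (fun k => π (φ k) G) :=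
      lamMeasure_open_le Λ hnn hadd hmono hG (fun k => π (φ k)) (fun k => hπ (φ k)) hΛ
    have aux : (ENNReal.ofNNReal (liminf (fun k ↦ P k G) atTop)) =
        liminf (ENNReal.ofNNReal ∘ fun k ↦ P k G) atTop := by
      refine Monotone.map_liminf_of_continuousAt (F := atTop) ENNReal.coe_mono (fun k => P k G)
        ENNReal.continuous_coe.continuousAt ?_ ?_
      · exact IsBoundedUnder.isCoboundedUnder_ge ⟨1, by simp⟩
      · exact ⟨0, by simp⟩
    rw [← ENNReal.coe_le_coe, aux]
    have heq : (ENNReal.ofNNReal ∘ fun k ↦ P k G) = fun k => π (φ k) G := by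
      funext k
      simp [hP, ProbabilityMeasure.ennreal_coeFn_eq_coeFn_toMeasure]
    rw [heq]
    calc (P0 G : ℝ≥0∞) = π0 G := P0.ennreal_coeFn_eq_coeFn_toMeasure G
      _ ≤ _ := hE
  have htendsto : Tendsto P atTop (𝓝 P0) := tendsto_of_forall_isOpen_le_liminf h_opens
  refine ⟨φ, π0, hφ, hπ0prob, fun f => ?_⟩
  exact ProbabilityMeasure.tendsto_iff_forall_integral_tendsto.mp htendsto f

end weaklimit

end SPiAux

open SPiAux

/-- For `S : Z × W → ℝ` continuous and bounded, `Z = X×Y` compact Polish and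
`ω` a finite measure, the set `{S_π : π ∈ Π(μ,ν)}`, `S_π(w) = ∫ S(z,w) dπ(z)`,
is sequentially compact for the strong `L²(ω)` topology: any sequence has a
subsequence converging in `L²(ω)`-norm to some `S_{π₀}` with
`π₀ ∈ Π(μ,ν)`. -/
theorem SPi_strongly_seq_compact
    {X Y W : Type*}
    [TopologicalSpace X] [PolishSpace X] [CompactSpace X]
    [MeasurableSpace X] [BorelSpace X]
    [TopologicalSpace Y] [PolishSpace Y] [CompactSpace Y]
    [MeasurableSpace Y] [BorelSpace Y]
    [TopologicalSpace W] [MeasurableSpace W] [BorelSpace W]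
    (ω : Measure W) [IsFiniteMeasure ω]
    (μ : Measure X) (ν : Measure Y)
    [IsProbabilityMeasure μ] [IsProbabilityMeasure ν]
    (S : (X × Y) × W → ℝ) (hSc : Continuous S) (hSb : ∃ M, ∀ p, |S p| ≤ M)
    (π : ℕ → Measure (X × Y))
    (hπp : ∀ k, IsProbabilityMeasure (π k))
    (hπc : ∀ k, (π k).map Prod.fst = μ ∧ (π k).map Prod.snd = ν) :
    ∃ (φ : ℕ → ℕ) (π0 : Measure (X × Y)), StrictMono φ ∧
      IsProbabilityMeasure π0 ∧
      π0.map Prod.fst = μ ∧ π0.map Prod.snd = ν ∧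
      Tendsto
        (fun k => ∫ w, (∫ z, S (z, w) ∂(π (φ k)) - ∫ z, S (z, w) ∂π0) ^ 2 ∂ω)
        atTop (𝓝 0) := by
  obtain ⟨M, hM⟩ := hSb
  set M' : ℝ := max M 0 with hM'def
  have hM' : ∀ p, |S p| ≤ M' := fun p => (hM p).trans (le_max_left _ _)
  have hM'0 : 0 ≤ M' := le_max_right _ _
  obtain ⟨φ, π0, hφ, hπ0prob, hW⟩ := exists_weak_limit π hπp
  -- convergence of integrals of continuous functions
  have hWc : ∀ f : C(X × Y, ℝ),
      Tendsto (fun k => ∫ z, f z ∂π (φ k)) atTop (𝓝 (∫ z, f z ∂π0)) := by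
    intro f
    exact hW (mkOfCompact f)
  -- marginals
  have hmargfst : π0.map Prod.fst = μ := by
    letI := upgradeIsCompletelyMetrizable X
    haveI : IsProbabilityMeasure (π0.map Prod.fst) :=
      Measure.isProbabilityMeasure_map measurable_fst.aemeasurable
    refine ext_of_forall_lintegral_eq_of_IsFiniteMeasure fun f => ?_
    have hcont : Continuous (fun x : X => (f x : ℝ)) := NNReal.continuous_coe.comp f.continuous
    set g : C(X, ℝ) := ⟨fun x => (f x : ℝ), hcont⟩ with hg
    have hreal : ∫ x, g x ∂(π0.map Prod.fst) = ∫ x, g x ∂μ := by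
      have h1 : ∫ x, g x ∂(π0.map Prod.fst) = ∫ z, g z.1 ∂π0 :=
        integral_map measurable_fst.aemeasurable g.continuous.aestronglyMeasurable
      set G : C(X × Y, ℝ) := g.comp ⟨Prod.fst, continuous_fst⟩ with hG
      have h2 := hWc G
      have h3 : ∀ k, ∫ z, G z ∂π (φ k) = ∫ x, g x ∂μ := by
        intro k
        have : ∫ z, G z ∂π (φ k) = ∫ x, g x ∂((π (φ k)).map Prod.fst) :=
          (integral_map measurable_fst.aemeasurable g.continuous.aestronglyMeasurable).symm
        rw [this, (hπc (φ k)).1]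
      simp only [h3] at h2
      have := tendsto_nhds_unique h2 tendsto_const_nhds
      rw [h1, ← this]
      rfl
    have hint1 : Integrable (fun x => (f x : ℝ)) (π0.map Prod.fst) := by
      have : IsProbabilityMeasure (π0.map Prod.fst) :=
        Measure.isProbabilityMeasure_map measurable_fst.aemeasurable
      exact cm_integrable g _
    have hint2 : Integrable (fun x => (f x : ℝ)) μ := cm_integrable g _
    rw [lintegral_coe_eq_integral f hint1, lintegral_coe_eq_integral f hint2]
    exact_mod_cast congrArg ENNReal.ofReal hreal
  have hmargsnd : π0.map Prod.snd = ν := by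
    letI := upgradeIsCompletelyMetrizable Y
    haveI : IsProbabilityMeasure (π0.map Prod.snd) :=
      Measure.isProbabilityMeasure_map measurable_snd.aemeasurable
    refine ext_of_forall_lintegral_eq_of_IsFiniteMeasure fun f => ?_
    have hcont : Continuous (fun y : Y => (f y : ℝ)) := NNReal.continuous_coe.comp f.continuous
    set g : C(Y, ℝ) := ⟨fun y => (f y : ℝ), hcont⟩ with hg
    have hreal : ∫ y, g y ∂(π0.map Prod.snd) = ∫ y, g y ∂ν := by
      have h1 : ∫ y, g y ∂(π0.map Prod.snd) = ∫ z, g z.2 ∂π0 :=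
        integral_map measurable_snd.aemeasurable g.continuous.aestronglyMeasurable
      set G : C(X × Y, ℝ) := g.comp ⟨Prod.snd, continuous_snd⟩ with hG
      have h2 := hWc G
      have h3 : ∀ k, ∫ z, G z ∂π (φ k) = ∫ y, g y ∂ν := by
        intro k
        have : ∫ z, G z ∂π (φ k) = ∫ y, g y ∂((π (φ k)).map Prod.snd) :=
          (integral_map measurable_snd.aemeasurable g.continuous.aestronglyMeasurable).symm
        rw [this, (hπc (φ k)).2]
      simp only [h3] at h2
      have := tendsto_nhds_unique h2 tendsto_const_nhds
      rw [h1, ← this]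
      rfl
    have hint1 : Integrable (fun y => (f y : ℝ)) (π0.map Prod.snd) := by
      have : IsProbabilityMeasure (π0.map Prod.snd) :=
        Measure.isProbabilityMeasure_map measurable_snd.aemeasurable
      exact cm_integrable g _
    have hint2 : Integrable (fun y => (f y : ℝ)) ν := cm_integrable g _
    rw [lintegral_coe_eq_integral f hint1, lintegral_coe_eq_integral f hint2]
    exact_mod_cast congrArg ENNReal.ofReal hreal
  -- continuity of the integral in w
  have hcontw : ∀ (m : Measure (X × Y)), IsProbabilityMeasure m →
      Continuous (fun w => ∫ z, S (z, w) ∂m) := by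
    intro m hm
    set T : C(W × (X × Y), ℝ) :=
      ⟨fun p => S (p.2, p.1), hSc.comp (continuous_snd.prodMk continuous_fst)⟩ with hT
    have hI : LipschitzWith 1 (fun f : C(X × Y, ℝ) => ∫ z, f z ∂m) := by
      refine LipschitzWith.of_dist_le_mul fun f g => ?_
      rw [NNReal.coe_one, one_mul, dist_eq_norm, ← integral_sub (cm_integrable f m) (cm_integrable g m)]
      have hb : ∀ z, ‖f z - g z‖ ≤ dist f g := by
        intro z
        calc ‖f z - g z‖ = ‖(f - g) z‖ := by simp
          _ ≤ ‖f - g‖ := (f - g).norm_coe_le_norm z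
          _ = dist f g := (dist_eq_norm f g).symm
      simpa using norm_integral_le_of_norm_le_const (μ := m) (.of_forall hb)
    have hcur : Continuous (fun w => T.curry w) := T.curry.continuous
    have : Continuous (fun w => ∫ z, (T.curry w) z ∂m) :=
      hI.continuous.comp hcur
    convert this using 2 with w
    rfl
  -- bound on the integrals
  have hIb : ∀ (m : Measure (X × Y)), IsProbabilityMeasure m → ∀ w,
      |∫ z, S (z, w) ∂m| ≤ M' := by
    intro m hm w
    rw [← Real.norm_eq_abs]
    simpa using norm_integral_le_of_norm_le_const (μ := m)
      (.of_forall fun z => (Real.norm_eq_abs _).le.trans (hM' (z, w)))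
  refine ⟨φ, π0, hφ, hπ0prob, hmargfst, hmargsnd, ?_⟩
  -- dominated convergence in w
  have hmain := tendsto_integral_of_dominated_convergence (μ := ω)
    (F := fun k w => (∫ z, S (z, w) ∂(π (φ k)) - ∫ z, S (z, w) ∂π0) ^ 2)
    (f := fun _ => (0:ℝ)) (bound := fun _ => (2 * M') ^ 2)
    ?_ (integrable_const _) ?_ ?_
  · simpa using hmain
  · intro k
    exact (((hcontw _ (hπp (φ k))).sub (hcontw _ hπ0prob)).pow 2).aestronglyMeasurable
  · intro k
    refine Eventually.of_forall fun w => ?_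
    have h1 := hIb _ (hπp (φ k)) w
    have h2 := hIb _ hπ0prob w
    rw [abs_le] at h1 h2
    have hab : |(∫ z, S (z, w) ∂(π (φ k))) - ∫ z, S (z, w) ∂π0| ≤ 2 * M' := by
      rw [abs_le]; constructor <;> linarith
    calc ‖((∫ z, S (z, w) ∂(π (φ k))) - ∫ z, S (z, w) ∂π0) ^ 2‖
        = |(∫ z, S (z, w) ∂(π (φ k))) - ∫ z, S (z, w) ∂π0| ^ 2 := by
          rw [Real.norm_eq_abs, abs_pow]
      _ ≤ (2 * M') ^ 2 := by
          have := abs_nonneg ((∫ z, S (z, w) ∂(π (φ k))) - ∫ z, S (z, w) ∂π0)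
          nlinarith
  · refine Eventually.of_forall fun w => ?_
    have hfw : Continuous (fun z : X × Y => S (z, w)) :=
      hSc.comp (continuous_id.prodMk continuous_const)
    have h := hWc ⟨fun z => S (z, w), hfw⟩
    have hd : Tendsto (fun k => (∫ z, S (z, w) ∂(π (φ k))) - ∫ z, S (z, w) ∂π0) atTop (𝓝 0) := by
      simpa using h.sub (tendsto_const_nhds (x := ∫ z, S (z, w) ∂π0))
    simpa using hd.pow 2
end

section
/- In the dual problem sup over f with ‖f‖_{L²(ω)} ≤ 1 of D(f) := sup_{(φ,ψ) ∈ Φ_{S^f}} ( ∫ φ dμ + ∫ ψ dν ), the functional satisfies D(kf) = k·D(f) for all k > 0 (assuming D(f) > 0), and consequently any optimal f satisfies ‖f‖_{L²} = 1; moreover, since Φ_{S^{f_0}} and Φ_{S^{f_1}} combine convexly into Φ_{S^{f_t}} for f_t = t f_1 + (1−t) f_0, the optimal f is unique whenever the optimal value is strictly positive. -/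
open MeasureTheory Filter Topology

/-- Properties of the dual functional
`D(f) = sup_{(φ,ψ) ∈ Φ_{S^f}} (∫ φ dμ + ∫ ψ dν)` of the quadratic
transportation problem with squared cost root `S`: it is positively
homogeneous (`D(kf) = k·D(f)` for `k > 0`, assuming `D(f) > 0`), any optimal
`f` in the unit ball of `L²(ω)` has norm exactly `1` when the optimal value is
strictly positive, and in that case the optimal `f` is unique. -/
theorem dual_optimal_f_norm_one_and_unique
    {X Y W : Type*}
    [TopologicalSpace X] [PolishSpace X] [CompactSpace X]
    [MeasurableSpace X] [BorelSpace X]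
    [TopologicalSpace Y] [PolishSpace Y] [CompactSpace Y]
    [MeasurableSpace Y] [BorelSpace Y]
    [TopologicalSpace W] [MeasurableSpace W] [BorelSpace W]
    (ω : Measure W) [IsFiniteMeasure ω]
    (μ : Measure X) (ν : Measure Y)
    [IsProbabilityMeasure μ] [IsProbabilityMeasure ν]
    (S : (X × Y) × W → ℝ) (hSc : Continuous S) (hSb : ∃ M, ∀ p, |S p| ≤ M)
    (D : Lp ℝ 2 ω → ℝ)
    (hD : ∀ f : Lp ℝ 2 ω,
      D f = sSup {r : ℝ | ∃ (φ : X → ℝ) (ψ : Y → ℝ),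
        Integrable φ μ ∧ Integrable ψ ν ∧
        (∀ x y, φ x + ψ y ≤ ∫ w, S ((x, y), w) * f w ∂ω) ∧
        r = ∫ x, φ x ∂μ + ∫ y, ψ y ∂ν}) :
    (∀ (f : Lp ℝ 2 ω) (k : ℝ), 0 < k → 0 < D f → D (k • f) = k * D f) ∧
    (∀ f : Lp ℝ 2 ω, ‖f‖ ≤ 1 →
      D f = sSup {r : ℝ | ∃ g : Lp ℝ 2 ω, ‖g‖ ≤ 1 ∧ r = D g} →
      0 < D f → ‖f‖ = 1) ∧
    (∀ f₀ f₁ : Lp ℝ 2 ω, ‖f₀‖ ≤ 1 → ‖f₁‖ ≤ 1 →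
      D f₀ = sSup {r : ℝ | ∃ g : Lp ℝ 2 ω, ‖g‖ ≤ 1 ∧ r = D g} →
      D f₁ = sSup {r : ℝ | ∃ g : Lp ℝ 2 ω, ‖g‖ ≤ 1 ∧ r = D g} →
      0 < D f₀ → f₀ = f₁) := by
  obtain ⟨M₀, hM₀⟩ := hSb
  set M : ℝ := max M₀ 0 with hMdef
  have hMS : ∀ p, |S p| ≤ M := fun p => (hM₀ p).trans (le_max_left _ _)
  have hM0 : (0 : ℝ) ≤ M := le_max_right _ _
  set A : Lp ℝ 2 ω → Set ℝ := fun f => {r : ℝ | ∃ (φ : X → ℝ) (ψ : Y → ℝ),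
        Integrable φ μ ∧ Integrable ψ ν ∧
        (∀ x y, φ x + ψ y ≤ ∫ w, S ((x, y), w) * f w ∂ω) ∧
        r = ∫ x, φ x ∂μ + ∫ y, ψ y ∂ν} with hAdef
  have hDA : ∀ f : Lp ℝ 2 ω, D f = sSup (A f) := hD
  set B : Set ℝ := {r : ℝ | ∃ g : Lp ℝ 2 ω, ‖g‖ ≤ 1 ∧ r = D g} with hBdef
  have hfInt : ∀ f : Lp ℝ 2 ω, Integrable (f : W → ℝ) ω :=
    fun f => (Lp.memLp f).integrable one_le_two
  -- bound on the inner integral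
  have hinner : ∀ (f : Lp ℝ 2 ω) (x : X) (y : Y),
      (∫ w, S ((x, y), w) * f w ∂ω) ≤ M * ∫ w, |f w| ∂ω := by
    intro f x y
    calc (∫ w, S ((x, y), w) * f w ∂ω)
        ≤ |∫ w, S ((x, y), w) * f w ∂ω| := le_abs_self _
      _ ≤ ∫ w, |S ((x, y), w)| * |f w| ∂ω := by
          simpa [Real.norm_eq_abs, abs_mul] using
            norm_integral_le_integral_norm (fun w => S ((x, y), w) * f w) (μ := ω)
      _ ≤ ∫ w, M * |f w| ∂ω := by
          refine integral_mono_of_nonneg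
            (Eventually.of_forall fun w => mul_nonneg (abs_nonneg _) (abs_nonneg _))
            (((hfInt f).abs).const_mul M) (Eventually.of_forall fun w => ?_)
          exact mul_le_mul_of_nonneg_right (hMS _) (abs_nonneg _)
      _ = M * ∫ w, |f w| ∂ω := integral_const_mul _ _
  -- every value in `A f` is bounded
  have hbdd : ∀ (f : Lp ℝ 2 ω), ∀ r ∈ A f, r ≤ M * ∫ w, |f w| ∂ω := by
    intro f r hr
    obtain ⟨φ, ψ, hφ, hψ, hfeas, rfl⟩ := hr
    set C : ℝ := M * ∫ w, |f w| ∂ω with hCdef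
    have h1 : ∀ y, (∫ x, φ x ∂μ) + ψ y ≤ C := by
      intro y
      have hμ : (∫ x, φ x ∂μ) ≤ ∫ _, (C - ψ y) ∂μ := by
        refine integral_mono hφ (integrable_const _) fun x => ?_
        have := (hfeas x y).trans (hinner f x y)
        simp only [← hCdef] at this ⊢
        linarith
      rw [integral_const] at hμ
      simp only [measure_univ, ENNReal.toReal_one, probReal_univ, one_mul, one_smul, smul_eq_mul] at hμ
      linarith
    have h2 : (∫ y, ((∫ x, φ x ∂μ) + ψ y) ∂ν) ≤ ∫ _, C ∂ν :=
      integral_mono ((integrable_const _).add hψ) (integrable_const _) h1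
    rw [integral_add (integrable_const _) hψ, integral_const, integral_const] at h2
    simp only [measure_univ, ENNReal.toReal_one, probReal_univ, one_mul, one_smul, smul_eq_mul] at h2
    linarith
  have hBdd : ∀ f : Lp ℝ 2 ω, BddAbove (A f) :=
    fun f => ⟨M * ∫ w, |f w| ∂ω, fun r hr => hbdd f r hr⟩
  -- nonemptiness from positivity
  have hne : ∀ f : Lp ℝ 2 ω, 0 < D f → (A f).Nonempty := by
    intro f hpos
    by_contra hemp
    rw [Set.not_nonempty_iff_eq_empty] at hemp
    rw [hDA f, hemp, Real.sSup_empty] at hpos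
    exact lt_irrefl 0 hpos
  -- scaling of feasible values
  have hscale : ∀ (f : Lp ℝ 2 ω) (k : ℝ), 0 < k → ∀ r ∈ A f, k * r ∈ A (k • f) := by
    intro f k hk r hr
    obtain ⟨φ, ψ, hφ, hψ, hfeas, rfl⟩ := hr
    refine ⟨fun x => k * φ x, fun y => k * ψ y, hφ.const_mul k, hψ.const_mul k, ?_, ?_⟩
    · intro x y
      have hae : (∫ w, S ((x, y), w) * (k • f) w ∂ω)
          = k * ∫ w, S ((x, y), w) * f w ∂ω := by
        rw [← integral_const_mul]
        refine integral_congr_ae ?_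
        filter_upwards [Lp.coeFn_smul k f] with w hw
        rw [hw, Pi.smul_apply, smul_eq_mul]
        ring
      rw [hae]
      calc k * φ x + k * ψ y = k * (φ x + ψ y) := by ring
        _ ≤ k * ∫ w, S ((x, y), w) * f w ∂ω :=
            mul_le_mul_of_nonneg_left (hfeas x y) hk.le
    · rw [integral_const_mul, integral_const_mul]
      ring
  -- positive homogeneity
  have hhom : ∀ (f : Lp ℝ 2 ω) (k : ℝ), 0 < k → 0 < D f → D (k • f) = k * D f := by
    intro f k hk hpos
    have hAf : (A f).Nonempty := hne f hpos
    obtain ⟨r₀, hr₀⟩ := hAf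
    have hAkf : (A (k • f)).Nonempty := ⟨k * r₀, hscale f k hk r₀ hr₀⟩
    rw [hDA (k • f), hDA f]
    apply le_antisymm
    · refine csSup_le hAkf fun r hr => ?_
      have h2 : k⁻¹ * r ∈ A f := by
        have := hscale (k • f) k⁻¹ (inv_pos.2 hk) r hr
        rwa [smul_smul, inv_mul_cancel₀ hk.ne', one_smul] at this
      have h3 := le_csSup (hBdd f) h2
      calc r = k * (k⁻¹ * r) := by field_simp
        _ ≤ k * sSup (A f) := mul_le_mul_of_nonneg_left h3 hk.le
    · have h4 : sSup (A f) ≤ k⁻¹ * sSup (A (k • f)) := by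
        refine csSup_le ⟨r₀, hr₀⟩ fun r hr => ?_
        have h5 := le_csSup (hBdd (k • f)) (hscale f k hk r hr)
        calc r = k⁻¹ * (k * r) := by field_simp
          _ ≤ k⁻¹ * sSup (A (k • f)) :=
              mul_le_mul_of_nonneg_left h5 (inv_pos.2 hk).le
      calc k * sSup (A f) ≤ k * (k⁻¹ * sSup (A (k • f))) :=
            mul_le_mul_of_nonneg_left h4 hk.le
        _ = sSup (A (k • f)) := by field_simp
  -- D 0 ≤ 0
  have hD0 : D (0 : Lp ℝ 2 ω) ≤ 0 := by
    have hz : (∫ w, |(0 : Lp ℝ 2 ω) w| ∂ω) = 0 := by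
      rw [← integral_zero W ℝ (μ := ω)]
      refine integral_congr_ae ?_
      filter_upwards [Lp.coeFn_zero ℝ 2 ω] with w hw
      rw [hw]
      simp
    rw [hDA]
    rcases (A (0 : Lp ℝ 2 ω)).eq_empty_or_nonempty with h | h
    · rw [h, Real.sSup_empty]
    · refine csSup_le h fun r hr => ?_
      have := hbdd 0 r hr
      rw [hz, mul_zero] at this
      exact this
  -- Part 2 : optimal f has norm 1
  have part2 : ∀ f : Lp ℝ 2 ω, ‖f‖ ≤ 1 → D f = sSup B → 0 < D f → ‖f‖ = 1 := by
    intro f hf1 hopt hpos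
    by_contra hne1
    have hflt : ‖f‖ < 1 := lt_of_le_of_ne hf1 hne1
    have hf0 : f ≠ 0 := by
      rintro rfl
      exact absurd hpos (not_lt.2 hD0)
    have hfpos : 0 < ‖f‖ := norm_pos_iff.2 hf0
    set k : ℝ := ‖f‖⁻¹ with hkdef
    have hkpos : 0 < k := inv_pos.2 hfpos
    have hk1 : 1 < k := (one_lt_inv₀ hfpos).2 hflt
    have hg1 : ‖k • f‖ ≤ 1 := by
      rw [norm_smul, Real.norm_eq_abs, abs_of_pos hkpos, hkdef,
        inv_mul_cancel₀ hfpos.ne']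
    have hBb : BddAbove B := by
      by_contra hb
      rw [hopt, Real.sSup_of_not_bddAbove hb] at hpos
      exact lt_irrefl 0 hpos
    have hle : D (k • f) ≤ sSup B := le_csSup hBb ⟨k • f, hg1, rfl⟩
    rw [hhom f k hkpos hpos, ← hopt] at hle
    nlinarith
  refine ⟨hhom, part2, ?_⟩
  -- Part 3 : uniqueness
  intro f₀ f₁ h₀ h₁ hopt₀ hopt₁ hpos₀
  have hpos₁ : 0 < D f₁ := by rw [hopt₁, ← hopt₀]; exact hpos₀
  have hn₀ : ‖f₀‖ = 1 := part2 f₀ h₀ hopt₀ hpos₀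
  have hn₁ : ‖f₁‖ = 1 := part2 f₁ h₁ hopt₁ hpos₁
  by_contra hne01
  set h : Lp ℝ 2 ω := (1 / 2 : ℝ) • (f₀ + f₁) with hhdef
  have hhlt : ‖h‖ < 1 := by
    have := (norm_midpoint_lt_iff (x := f₀) (y := f₁) (hn₀.trans hn₁.symm)).2 hne01
    rwa [hn₀] at this
  -- midpoint feasibility
  have hmid : ∀ r₀ ∈ A f₀, ∀ r₁ ∈ A f₁, (r₀ + r₁) / 2 ∈ A h := by
    rintro r₀ ⟨φ₀, ψ₀, hφ₀, hψ₀, hfe₀, rfl⟩ r₁ ⟨φ₁, ψ₁, hφ₁, hψ₁, hfe₁, rfl⟩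
    refine ⟨fun x => (φ₀ x + φ₁ x) / 2, fun y => (ψ₀ y + ψ₁ y) / 2,
      (hφ₀.add hφ₁).div_const 2, (hψ₀.add hψ₁).div_const 2, ?_, ?_⟩
    · intro x y
      have hSm : AEStronglyMeasurable (fun w => S ((x, y), w)) ω :=
        (hSc.comp (Continuous.prodMk_right ((x, y) : X × Y))).aestronglyMeasurable
      have hSbd : ∃ C, ∀ w, ‖S ((x, y), w)‖ ≤ C :=
        ⟨M, fun w => by simpa [Real.norm_eq_abs] using hMS ((x, y), w)⟩
      have hint₀ : Integrable (fun w => S ((x, y), w) * f₀ w) ω :=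
        (hfInt f₀).bdd_mul hSm (Eventually.of_forall hSbd.choose_spec)
      have hint₁ : Integrable (fun w => S ((x, y), w) * f₁ w) ω :=
        (hfInt f₁).bdd_mul hSm (Eventually.of_forall hSbd.choose_spec)
      have hae : (∫ w, S ((x, y), w) * h w ∂ω)
          = ((∫ w, S ((x, y), w) * f₀ w ∂ω) + ∫ w, S ((x, y), w) * f₁ w ∂ω) / 2 := by
        rw [← integral_add hint₀ hint₁, ← integral_div]
        refine integral_congr_ae ?_
        filter_upwards [Lp.coeFn_smul (1 / 2 : ℝ) (f₀ + f₁), Lp.coeFn_add f₀ f₁]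
          with w hw hw'
        rw [hhdef, hw, Pi.smul_apply, hw', Pi.add_apply, smul_eq_mul]
        ring
      rw [hae]
      have h0 := hfe₀ x y
      have h1 := hfe₁ x y
      linarith
    · rw [integral_div, integral_div, integral_add hφ₀ hφ₁, integral_add hψ₀ hψ₁]
      ring
  have hAne₀ : (A f₀).Nonempty := hne f₀ hpos₀
  have hAne₁ : (A f₁).Nonempty := hne f₁ hpos₁
  have e₀ : sSup (A f₀) = sSup B := by rw [← hDA f₀]; exact hopt₀
  have e₁ : sSup (A f₁) = sSup B := by rw [← hDA f₁]; exact hopt₁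
  -- D h ≥ sSup B
  have hDh : sSup B ≤ D h := by
    rw [hDA h]
    have key : ∀ r₀ ∈ A f₀, ∀ r₁ ∈ A f₁, (r₀ + r₁) / 2 ≤ sSup (A h) :=
      fun r₀ h0 r₁ h1 => le_csSup (hBdd h) (hmid r₀ h0 r₁ h1)
    have step1 : ∀ r₁ ∈ A f₁, sSup (A f₀) ≤ 2 * sSup (A h) - r₁ := by
      intro r₁ h1
      refine csSup_le hAne₀ fun r₀ h0 => ?_
      linarith [key r₀ h0 r₁ h1]
    have step2 : sSup (A f₁) ≤ 2 * sSup (A h) - sSup (A f₀) := by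
      refine csSup_le hAne₁ fun r₁ h1 => ?_
      linarith [step1 r₁ h1]
    rw [e₀, e₁] at step2
    linarith
  have hDhpos : 0 < D h := lt_of_lt_of_le (hopt₀ ▸ hpos₀) hDh
  have hBb : BddAbove B := by
    by_contra hb
    rw [hopt₀, Real.sSup_of_not_bddAbove hb] at hpos₀
    exact lt_irrefl 0 hpos₀
  have hDh' : D h ≤ sSup B := le_csSup hBb ⟨h, hhlt.le, rfl⟩
  have hopth : D h = sSup B := le_antisymm hDh' hDh
  have := part2 h hhlt.le hopth hDhpos
  rw [this] at hhlt
  exact lt_irrefl 1 hhlt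
end
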